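/- arXiv:2009.11543 — 2 statements merged into one kernel-verified Lean document; each statement's English description precedes it below -/
import Mathlib

section
/- For keys key_0 < key_1 < ... < key_n, the set of distinction bit positions over all pairs {D-bit(key_i, key_j) : i ≠ j} is exactly equal to the set {D-bit(key_{k-1}, key_k) : 1 ≤ k ≤ n} of distinction bit positions of adjacent keys. -/
/-- Lexicographic order on fixed-length bit strings (position 0 most significant). -/
def keyLt {m : ℕ} (x y : Fin m → Bool) : Prop :=
  ∃ i : Fin m, (∀ j : Fin m, j < i → x j = y j) ∧ x i < y i

/-- Distinction bit position: the least position where `x` and `y` differ. -/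
noncomputable def dbit {m : ℕ} (x y : Fin m → Bool) : ℕ :=
  sInf {i : ℕ | ∃ h : i < m, x ⟨i, h⟩ ≠ y ⟨i, h⟩}

lemma dbit_comm {m : ℕ} (x y : Fin m → Bool) : dbit x y = dbit y x := by
  unfold dbit
  congr 1
  ext i
  constructor <;> rintro ⟨h, hne⟩ <;> exact ⟨h, fun e => hne e.symm⟩

lemma keyLt_dbit {m : ℕ} {x y : Fin m → Bool} {i : Fin m}
    (hpre : ∀ j : Fin m, j < i → x j = y j) (hlt : x i < y i) :
    dbit x y = i := by
  have hxy : x i ≠ y i := ne_of_lt hlt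
  have hmem : (i : ℕ) ∈ {k : ℕ | ∃ h : k < m, x ⟨k, h⟩ ≠ y ⟨k, h⟩} :=
    ⟨i.isLt, by simpa using hxy⟩
  have hne : {k : ℕ | ∃ h : k < m, x ⟨k, h⟩ ≠ y ⟨k, h⟩}.Nonempty := ⟨_, hmem⟩
  have h1 : dbit x y ≤ i := Nat.sInf_le hmem
  rcases Nat.sInf_mem hne with ⟨hlt', hne'⟩
  rcases lt_or_eq_of_le h1 with h | h
  · exact absurd (hpre ⟨dbit x y, hlt'⟩ h) hne'
  · exact h

lemma keyLt_trans_dbit {m : ℕ} {x y z : Fin m → Bool} (hxy : keyLt x y) (hyz : keyLt y z) :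
    keyLt x z ∧ dbit x z = min (dbit x y) (dbit y z) := by
  obtain ⟨p, hp, hpl⟩ := hxy
  obtain ⟨q, hq, hql⟩ := hyz
  have hdp := keyLt_dbit hp hpl
  have hdq := keyLt_dbit hq hql
  have hxp : x p = false := by revert hpl; cases hx : x p <;> cases hy : y p <;> simp
  have hyp : y p = true := by revert hpl; cases hx : x p <;> cases hy : y p <;> simp
  have hyq : y q = false := by revert hql; cases hx : y q <;> cases hy : z q <;> simp
  have hzq : z q = true := by revert hql; cases hx : y q <;> cases hy : z q <;> simp
  have hpq : p ≠ q := fun e => by rw [e, hyq] at hyp; exact absurd hyp (by simp)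
  rcases lt_or_gt_of_ne hpq with h | h
  · have hzp : z p = true := by rw [← hq p h]; exact hyp
    have hpre : ∀ j : Fin m, j < p → x j = z j := fun j hj => by
      rw [hp j hj, hq j (hj.trans h)]
    have hlt : x p < z p := by rw [hxp, hzp]; exact Bool.false_lt_true
    refine ⟨⟨p, hpre, hlt⟩, ?_⟩
    rw [keyLt_dbit hpre hlt, hdp, hdq]
    exact (min_eq_left (Fin.lt_def.mp h).le).symm
  · have hxq : x q = false := by rw [hp q h]; exact hyq
    have hpre : ∀ j : Fin m, j < q → x j = z j := fun j hj => by
      rw [hp j (hj.trans h), hq j hj]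
    have hlt : x q < z q := by rw [hxq, hzq]; exact Bool.false_lt_true
    refine ⟨⟨q, hpre, hlt⟩, ?_⟩
    rw [keyLt_dbit hpre hlt, hdp, hdq]
    exact (min_eq_right (Fin.lt_def.mp h).le).symm

lemma dbit_chain {m n : ℕ} (key : ℕ → Fin m → Bool)
    (hinc : ∀ k < n, keyLt (key k) (key (k + 1))) :
    ∀ j ≤ n, ∀ i < j, keyLt (key i) (key j) ∧
      ∃ k, i < k ∧ k ≤ j ∧ dbit (key i) (key j) = dbit (key (k - 1)) (key k) := by
  intro j
  induction j with
  | zero => intro _ i hi; omega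
  | succ j ih =>
    intro hj i hi
    have hstep : keyLt (key j) (key (j + 1)) := hinc j (by omega)
    rcases Nat.lt_succ_iff_lt_or_eq.mp hi with h | h
    · obtain ⟨hk, k, hk1, hk2, hk3⟩ := ih (by omega) i h
      obtain ⟨hlt, hmin⟩ := keyLt_trans_dbit hk hstep
      refine ⟨hlt, ?_⟩
      rcases min_cases (dbit (key i) (key j)) (dbit (key j) (key (j + 1))) with ⟨he, _⟩ | ⟨he, _⟩
      · exact ⟨k, hk1, by omega, by rw [hmin, he, hk3]⟩
      · exact ⟨j + 1, by omega, le_refl _, by rw [hmin, he]; simp⟩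
    · subst h
      exact ⟨hstep, ⟨i + 1, by omega, le_refl _, by simp⟩⟩

/-- The set of distinction bit positions over all pairs of keys equals the set of
distinction bit positions of adjacent keys in sorted order. -/
theorem dbit_all_pairs_eq_adjacent {m n : ℕ} (key : ℕ → Fin m → Bool)
    (hinc : ∀ k < n, keyLt (key k) (key (k + 1))) :
    {d : ℕ | ∃ i j : ℕ, i ≤ n ∧ j ≤ n ∧ i ≠ j ∧ d = dbit (key i) (key j)}
      = {d : ℕ | ∃ k : ℕ, 1 ≤ k ∧ k ≤ n ∧ d = dbit (key (k - 1)) (key k)} := by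
  ext d
  simp only [Set.mem_setOf_eq]
  constructor
  · rintro ⟨i, j, hi, hj, hij, hd⟩
    rcases lt_or_gt_of_ne hij with h | h
    · obtain ⟨_, k, hk1, hk2, hk3⟩ := dbit_chain key hinc j hj i h
      exact ⟨k, by omega, by omega, by rw [hd, hk3]⟩
    · obtain ⟨_, k, hk1, hk2, hk3⟩ := dbit_chain key hinc i hi j h
      exact ⟨k, by omega, by omega, by rw [hd, dbit_comm, hk3]⟩
  · rintro ⟨k, h1, h2, hd⟩
    exact ⟨k - 1, k, by omega, h2, by omega, hd⟩
end

section
/- Existence of an x-split: given sorted lists B_1,...,B_{tp} over a linear order with total length n and any 0 ≤ x ≤ n, there exist prefix lengths l_1,...,l_{tp} with Σ l_i = x such that every element among the first l_i elements of each B_i is ≤ every element among the remaining elements of each B_j (for all i, j). -/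
/-!
Greedy induction on `x`: given a split of size `x < n`, the least element `m` among all
remaining suffixes sits at the head of its own suffix (that suffix is sorted), so moving
this head into the prefix keeps every prefix element below every suffix element.
-/

namespace List

variable {α : Type*}

lemma lt_length_of_mem_drop {L : List α} {k : ℕ} {b : α} (hb : b ∈ L.drop k) :
    k < L.length := by
  have := length_pos_of_mem hb
  rw [length_drop] at this
  omega

lemma Pairwise.getElem_le_of_mem_drop [Preorder α] {L : List α} (hL : L.Pairwise (· ≤ ·)) {k : ℕ}
    (hk : k < L.length) {b : α} (hb : b ∈ L.drop k) : L[k] ≤ b := by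
  have hsuffix := hL.sublist (drop_sublist k L)
  rw [drop_eq_getElem_cons hk] at hb hsuffix
  rcases mem_cons.mp hb with rfl | hb
  · exact le_rfl
  · exact rel_of_pairwise_cons hsuffix hb

end List

section Split

variable {α : Type*} {N : ℕ}

def IsSplit [LE α] (B : Fin N → List α) (l : Fin N → ℕ) : Prop :=
  (∀ i, l i ≤ (B i).length) ∧
    ∀ i j : Fin N, ∀ a ∈ (B i).take (l i), ∀ b ∈ (B j).drop (l j), a ≤ b

lemma isSplit_zero [LE α] (B : Fin N → List α) : IsSplit B 0 :=
  ⟨fun _ => Nat.zero_le _, fun _ _ _ ha => by simp at ha⟩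

lemma exists_min_mem_drop [LinearOrder α] (B : Fin N → List α) (l : Fin N → ℕ) {i : Fin N}
    (hi : l i < (B i).length) :
    ∃ j, ∃ m ∈ (B j).drop (l j), ∀ k, ∀ b ∈ (B k).drop (l k), m ≤ b := by
  let suffixes := Finset.univ.biUnion fun k => ((B k).drop (l k)).toFinset
  have hne : suffixes.Nonempty := ⟨(B i)[l i], Finset.mem_biUnion.mpr
    ⟨i, Finset.mem_univ _, List.mem_toFinset.mpr <| by
      rw [List.drop_eq_getElem_cons hi]; exact List.mem_cons_self⟩⟩
  obtain ⟨m, hm, hmin⟩ := suffixes.exists_min_image id hne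
  obtain ⟨j, -, hmj⟩ := Finset.mem_biUnion.mp hm
  exact ⟨j, m, List.mem_toFinset.mp hmj, fun k b hb =>
    hmin b (Finset.mem_biUnion.mpr ⟨k, Finset.mem_univ _, List.mem_toFinset.mpr hb⟩)⟩

lemma IsSplit.add_single [LE α] {B : Fin N → List α} {l : Fin N → ℕ} (h : IsSplit B l) {j : Fin N}
    (hj : l j < (B j).length) (hhead : ∀ k, ∀ b ∈ (B k).drop (l k), (B j)[l j] ≤ b) :
    IsSplit B (l + Pi.single j 1) := by
  have hdrop (k : Fin N) : (B k).drop ((l + Pi.single j 1 : Fin N → ℕ) k) ⊆ (B k).drop (l k) :=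
    (List.drop_sublist_drop_left _ (Nat.le_add_right _ _)).subset
  refine ⟨fun i => ?_, fun i k a ha b hb => ?_⟩
  · rcases eq_or_ne i j with rfl | hij
    · simpa using hj
    · simpa [Pi.single_eq_of_ne hij] using h.1 i
  · rcases eq_or_ne i j with rfl | hij
    · rw [Pi.add_apply, Pi.single_eq_same, ← List.take_concat_get' _ _ hj] at ha
      rcases List.mem_append.mp ha with ha | ha
      · exact h.2 i k a ha b (hdrop k hb)
      · rw [List.mem_singleton.mp ha]
        exact hhead k b (hdrop k hb)
    · rw [Pi.add_apply, Pi.single_eq_of_ne hij, add_zero] at ha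
      exact h.2 i k a ha b (hdrop k hb)

lemma IsSplit.exists_succ [LinearOrder α] {B : Fin N → List α}
    (hsorted : ∀ i, (B i).Pairwise (· ≤ ·)) {l : Fin N → ℕ} (h : IsSplit B l) (hlt : ∑ i, l i < ∑ i, (B i).length) :
    ∃ l', IsSplit B l' ∧ ∑ i, l' i = ∑ i, l i + 1 := by
  obtain ⟨i, hi⟩ : ∃ i, l i < (B i).length := by
    by_contra! hge
    exact hlt.not_ge (Finset.sum_le_sum fun i _ => hge i)
  obtain ⟨j, m, hm, hmin⟩ := exists_min_mem_drop B l hi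
  have hj := List.lt_length_of_mem_drop hm
  refine ⟨l + Pi.single j 1, h.add_single hj fun k b hb => ?_, ?_⟩
  · exact ((hsorted j).getElem_le_of_mem_drop hj hm).trans (hmin k b hb)
  · simp [Finset.sum_add_distrib]

end Split

/-- Existence of an x-split: sorted blocks B_1, ..., B_N of total length n admit,
for any 0 ≤ x ≤ n, prefix lengths l_i summing to x such that every element of a
prefix is ≤ every element of any suffix. -/
theorem exists_x_split {α : Type*} [LinearOrder α] {N n : ℕ}
    (B : Fin N → List α) (hsorted : ∀ i, (B i).Pairwise (· ≤ ·))
    (hn : ∑ i, (B i).length = n) (x : ℕ) (hx : x ≤ n) :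
    ∃ l : Fin N → ℕ,
      (∀ i, l i ≤ (B i).length) ∧
      (∑ i, l i = x) ∧
      (∀ i j : Fin N, ∀ a ∈ (B i).take (l i), ∀ b ∈ (B j).drop (l j), a ≤ b) := by
  suffices ∃ l, IsSplit B l ∧ ∑ i, l i = x by
    obtain ⟨l, ⟨hlen, horder⟩, hsum⟩ := this
    exact ⟨l, hlen, hsum, horder⟩
  induction x with
  | zero => exact ⟨0, isSplit_zero B, by simp⟩
  | succ x ih =>
    obtain ⟨l, hl, hsum⟩ := ih (by omega)
    obtain ⟨l', hl', hsum'⟩ := hl.exists_succ hsorted (by omega)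
    exact ⟨l', hl', by omega⟩
end
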